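/- One-step descent for corrected local objectives: let f, g : ℝ^d → ℝ be μ-strongly convex and β-smooth with ∇g(w) = ∇f(w) at a point w, and let w' satisfy ‖∇g(w')‖ = δ·‖∇g(w)‖ with 0 ≤ δ ≤ 1. Then f(w') ≤ f(w) - ρ·‖∇f(w)‖², where ρ = (1-δ)²/β - (1+δ)δ/μ - β(1+δ)²/(2μ²). -/

import Mathlib

open scoped RealInnerProductSpace

section Aux

variable {E : Type*} [NormedAddCommGroup E] [InnerProductSpace ℝ E] [CompleteSpace E]

lemma line_hasDerivAt {φ : E → ℝ} {F : E → E} (hφ : ∀ z, HasGradientAt φ (F z) z)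
    (x y : E) (t : ℝ) :
    HasDerivAt (fun t : ℝ => φ (x + t • (y - x))) ⟪F (x + t • (y - x)), y - x⟫ t := by
  have hγ : HasDerivAt (fun t : ℝ => x + t • (y - x)) (y - x) t := by
    simpa using ((hasDerivAt_id t).smul_const (y - x)).const_add x
  have h1 := hφ (x + t • (y - x))
  rw [hasGradientAt_iff_hasFDerivAt] at h1
  have h2 := h1.comp_hasDerivAt t hγ
  simpa [InnerProductSpace.toDual_apply_apply, Function.comp_def] using h2

lemma grad_mono_le {φ : E → ℝ} {F : E → E} (hφ : ∀ z, HasGradientAt φ (F z) z)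
    (hmono : ∀ u v, 0 ≤ ⟪F u - F v, u - v⟫) (x y : E) :
    φ x + ⟪F x, y - x⟫ ≤ φ y := by
  have hψ : ∀ t : ℝ, HasDerivAt (fun t : ℝ => φ (x + t • (y - x)))
      ⟪F (x + t • (y - x)), y - x⟫ t := line_hasDerivAt hφ x y
  obtain ⟨c, hc, hceq⟩ := exists_hasDerivAt_eq_slope (fun t : ℝ => φ (x + t • (y - x)))
      (fun t => ⟪F (x + t • (y - x)), y - x⟫) one_pos
      (fun t _ => ((hψ t).continuousAt).continuousWithinAt) (fun t _ => hψ t)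
  simp only [one_smul, zero_smul, add_zero, div_one, add_sub_cancel, sub_zero] at hceq
  have hkey : ⟪F x, y - x⟫ ≤ ⟪F (x + c • (y - x)), y - x⟫ := by
    have hm := hmono (x + c • (y - x)) x
    have hsub : x + c • (y - x) - x = c • (y - x) := by abel
    rw [hsub, real_inner_smul_right] at hm
    have hcpos : 0 < c := hc.1
    have : 0 ≤ ⟪F (x + c • (y - x)) - F x, y - x⟫ := nonneg_of_mul_nonneg_right hm hcpos
    rw [inner_sub_left] at this
    linarith
  rw [hceq] at hkey
  linarith

lemma grad_normsq (β : ℝ) (z : E) :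
    HasGradientAt (fun z : E => β / 2 * ⟪z, z⟫) (β • z) z := by
  rw [hasGradientAt_iff_hasFDerivAt]
  have h := ((hasFDerivAt_id z).inner ℝ (hasFDerivAt_id z)).const_mul (β / 2)
  refine h.congr_fderiv ?_
  ext v
  simp [InnerProductSpace.toDual_apply_apply, fderivInnerCLM_apply, real_inner_smul_left,
    real_inner_comm]
  ring

lemma grad_inner_const (c : E) (z : E) :
    HasGradientAt (fun z : E => ⟪c, z⟫) c z := by
  rw [hasGradientAt_iff_hasFDerivAt]
  have h := (InnerProductSpace.toDual ℝ E c).hasFDerivAt (x := z)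
  exact h.congr_of_eventuallyEq (by filter_upwards with w using
    (InnerProductSpace.toDual_apply_apply).symm)

lemma HasGradientAt.sub'' {φ q : E → ℝ} {a b : E} {x : E}
    (h1 : HasGradientAt φ a x) (h2 : HasGradientAt q b x) :
    HasGradientAt (fun z => φ z - q z) (a - b) x := by
  rw [hasGradientAt_iff_hasFDerivAt] at *
  simpa [map_sub, Pi.sub_def] using h1.sub h2

lemma descent_lemma {φ : E → ℝ} {F : E → E} {β : ℝ} (hβ : 0 < β)
    (hφ : ∀ z, HasGradientAt φ (F z) z)
    (hlip : ∀ u v, ‖F u - F v‖ ≤ β * ‖u - v‖) (x y : E) :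
    φ y ≤ φ x + ⟪F x, y - x⟫ + β / 2 * ‖y - x‖ ^ 2 := by
  have hgrad : ∀ z, HasGradientAt (fun z : E => β / 2 * ⟪z, z⟫ - φ z) (β • z - F z) z :=
    fun z => (grad_normsq β z).sub'' (hφ z)
  have hmono : ∀ u v : E, 0 ≤ ⟪(β • u - F u) - (β • v - F v), u - v⟫ := by
    intro u v
    have hre : (β • u - F u) - (β • v - F v) = β • (u - v) - (F u - F v) := by
      rw [smul_sub]; abel
    have h1 : ⟪(β • u - F u) - (β • v - F v), u - v⟫
        = β * ‖u - v‖ ^ 2 - ⟪F u - F v, u - v⟫ := by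
      rw [hre, inner_sub_left, real_inner_smul_left, real_inner_self_eq_norm_sq]
    have h2 : ⟪F u - F v, u - v⟫ ≤ β * ‖u - v‖ ^ 2 := by
      calc ⟪F u - F v, u - v⟫ ≤ ‖F u - F v‖ * ‖u - v‖ := real_inner_le_norm _ _
        _ ≤ (β * ‖u - v‖) * ‖u - v‖ :=
            mul_le_mul_of_nonneg_right (hlip u v) (norm_nonneg _)
        _ = β * ‖u - v‖ ^ 2 := by ring
    linarith
  have h := grad_mono_le hgrad hmono x y
  have hxid : ⟪β • x - F x, y - x⟫ = β * (⟪x, y⟫ - ⟪x, x⟫) - ⟪F x, y - x⟫ := by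
    rw [inner_sub_left, real_inner_smul_left, inner_sub_right]
  have hnid : ‖y - x‖ ^ 2 = ⟪y, y⟫ - 2 * ⟪x, y⟫ + ⟪x, x⟫ := by
    rw [← real_inner_self_eq_norm_sq, inner_sub_left, inner_sub_right, inner_sub_right,
      real_inner_comm y x]
    ring
  nlinarith [h, hxid, hnid]

lemma coco_half {g : E → ℝ} {g' : E → E} {β : ℝ} (hβ : 0 < β)
    (hgrad : ∀ z, HasGradientAt g (g' z) z)
    (hmono : ∀ u v, 0 ≤ ⟪g' u - g' v, u - v⟫)
    (hlip : ∀ u v, ‖g' u - g' v‖ ≤ β * ‖u - v‖) (u v : E) :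
    g u + ⟪g' u, v - u⟫ + 1 / (2 * β) * ‖g' v - g' u‖ ^ 2 ≤ g v := by
  set F : E → E := fun z => g' z - g' u with hFdef
  have hF : ∀ z, HasGradientAt (fun z => g z - ⟪g' u, z⟫) (F z) z :=
    fun z => (hgrad z).sub'' (grad_inner_const (g' u) z)
  have hFmono : ∀ a b, 0 ≤ ⟪F a - F b, a - b⟫ := by
    intro a b
    have : F a - F b = g' a - g' b := by simp [hFdef]
    rw [this]; exact hmono a b
  have hFlip : ∀ a b, ‖F a - F b‖ ≤ β * ‖a - b‖ := by
    intro a b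
    have : F a - F b = g' a - g' b := by simp [hFdef]
    rw [this]; exact hlip a b
  set z := v - β⁻¹ • F v with hzdef
  have hmin : g u - ⟪g' u, u⟫ ≤ g z - ⟪g' u, z⟫ := by
    have h := grad_mono_le hF hFmono u z
    have hFu : F u = 0 := by simp [hFdef]
    rw [hFu] at h
    simpa using h
  have hdesc := descent_lemma hβ hF hFlip v z
  have hzv : z - v = -(β⁻¹ • F v) := by rw [hzdef]; abel
  have hin : ⟪F v, z - v⟫ = -(β⁻¹ * ‖F v‖ ^ 2) := by
    rw [hzv, inner_neg_right, real_inner_smul_right, real_inner_self_eq_norm_sq]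
  have hnr : ‖z - v‖ ^ 2 = β⁻¹ ^ 2 * ‖F v‖ ^ 2 := by
    rw [hzv, norm_neg, norm_smul, mul_pow]
    congr 1
    rw [Real.norm_eq_abs, sq_abs]
  rw [hin, hnr] at hdesc
  have hβne : β ≠ 0 := hβ.ne'
  have hsimp : g v - ⟪g' u, v⟫ + -(β⁻¹ * ‖F v‖ ^ 2) + β / 2 * (β⁻¹ ^ 2 * ‖F v‖ ^ 2)
      = g v - ⟪g' u, v⟫ - 1 / (2 * β) * ‖F v‖ ^ 2 := by
    field_simp
    ring
  rw [hsimp] at hdesc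
  have hFv : F v = g' v - g' u := rfl
  have hiv : ⟪g' u, v - u⟫ = ⟪g' u, v⟫ - ⟪g' u, u⟫ := inner_sub_right _ _ _
  rw [hFv] at hdesc
  have hchain := le_trans hmin hdesc
  linarith

lemma coco {g : E → ℝ} {g' : E → E} {β : ℝ} (hβ : 0 < β)
    (hgrad : ∀ z, HasGradientAt g (g' z) z)
    (hmono : ∀ u v, 0 ≤ ⟪g' u - g' v, u - v⟫)
    (hlip : ∀ u v, ‖g' u - g' v‖ ≤ β * ‖u - v‖) (u v : E) :
    1 / β * ‖g' u - g' v‖ ^ 2 ≤ ⟪g' u - g' v, u - v⟫ := by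
  have h1 := coco_half hβ hgrad hmono hlip u v
  have h2 := coco_half hβ hgrad hmono hlip v u
  have hn : ‖g' v - g' u‖ = ‖g' u - g' v‖ := norm_sub_rev _ _
  have hi : ⟪g' u, v - u⟫ + ⟪g' v, u - v⟫ = -⟪g' u - g' v, u - v⟫ := by
    rw [inner_sub_left]
    have : ⟪g' u, v - u⟫ = -⟪g' u, u - v⟫ := by
      rw [← inner_neg_right]; congr 1; abel
    rw [this]; ring
  rw [hn] at h1
  have hhalf : (1 : ℝ) / (2 * β) + 1 / (2 * β) = 1 / β := by
    field_simp
    norm_num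
  nlinarith [h1, h2, hi]

end Aux

theorem stmt_7 {d : ℕ} (f g : EuclideanSpace ℝ (Fin d) → ℝ)
    (f' g' : EuclideanSpace ℝ (Fin d) → EuclideanSpace ℝ (Fin d))
    (μ β δ : ℝ) (hμ : 0 < μ) (hμβ : μ ≤ β)
    (hgradf : ∀ z, HasGradientAt f (f' z) z)
    (hgradg : ∀ z, HasGradientAt g (g' z) z)
    (hscf : ∀ u v, μ * ‖u - v‖ ^ 2 ≤ ⟪f' u - f' v, u - v⟫)
    (hsmf : ∀ u v, ‖f' u - f' v‖ ≤ β * ‖u - v‖)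
    (hscg : ∀ u v, μ * ‖u - v‖ ^ 2 ≤ ⟪g' u - g' v, u - v⟫)
    (hsmg : ∀ u v, ‖g' u - g' v‖ ≤ β * ‖u - v‖)
    (w w' : EuclideanSpace ℝ (Fin d))
    (heq : g' w = f' w)
    (hδ0 : 0 ≤ δ) (hδ1 : δ ≤ 1)
    (hres : ‖g' w'‖ = δ * ‖g' w‖) :
    f w' ≤ f w -
      ((1 - δ) ^ 2 / β - (1 + δ) * δ / μ - β * (1 + δ) ^ 2 / (2 * μ ^ 2)) * ‖f' w‖ ^ 2 := by
  have hβ : 0 < β := lt_of_lt_of_le hμ hμβ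
  set G := ‖f' w‖ with hGdef
  set R := ‖w' - w‖ with hRdef
  have hG0 : 0 ≤ G := norm_nonneg _
  have hR0 : 0 ≤ R := norm_nonneg _
  have hGg : ‖g' w‖ = G := by rw [heq]
  have hres' : ‖g' w'‖ = δ * G := by rw [hres, hGg]
  -- bound on R
  have hsc := hscg w' w
  have hub : ⟪g' w' - g' w, w' - w⟫ ≤ (1 + δ) * G * R := by
    calc ⟪g' w' - g' w, w' - w⟫ ≤ ‖g' w' - g' w‖ * ‖w' - w‖ := real_inner_le_norm _ _
      _ ≤ (‖g' w'‖ + ‖g' w‖) * R := by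
          apply mul_le_mul_of_nonneg_right (norm_sub_le _ _) hR0
      _ = (1 + δ) * G * R := by rw [hres', hGg]; ring
  have hRle : R ≤ (1 + δ) * G / μ := by
    rcases hR0.eq_or_lt with h | h
    · rw [← h]; positivity
    · have h1 : μ * R * R ≤ ((1 + δ) * G) * R := by nlinarith
      have h2 : μ * R ≤ (1 + δ) * G := le_of_mul_le_mul_right h1 h
      rw [le_div_iff₀ hμ]; linarith
  -- cocoercivity bound
  have hmg : ∀ u v, 0 ≤ ⟪g' u - g' v, u - v⟫ := by
    intro u v
    exact le_trans (by positivity) (hscg u v)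
  have hcoco := coco hβ hgradg hmg hsmg w' w
  have hlb : (1 - δ) * G ≤ ‖g' w' - g' w‖ := by
    have := norm_sub_norm_le (g' w) (g' w')
    rw [hGg, hres', norm_sub_rev] at this
    linarith
  have hlb2 : (1 - δ) ^ 2 * G ^ 2 ≤ ‖g' w' - g' w‖ ^ 2 := by
    have h0 : 0 ≤ (1 - δ) * G := by
      apply mul_nonneg (by linarith) hG0
    nlinarith
  have hcoco2 : 1 / β * ((1 - δ) ^ 2 * G ^ 2) ≤ ⟪g' w' - g' w, w' - w⟫ := by
    refine le_trans ?_ hcoco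
    apply mul_le_mul_of_nonneg_left hlb2 (by positivity)
  -- inner product bound
  have hinner2 : ⟪g' w', w' - w⟫ ≤ δ * G * ((1 + δ) * G / μ) := by
    calc ⟪g' w', w' - w⟫ = ⟪g' w' - 0, w' - w⟫ := by rw [sub_zero]
      _ ≤ ‖g' w' - 0‖ * ‖w' - w‖ := real_inner_le_norm _ _
      _ = δ * G * R := by rw [sub_zero, hres']
      _ ≤ δ * G * ((1 + δ) * G / μ) := by
          apply mul_le_mul_of_nonneg_left hRle (by positivity)
  have hsplit : ⟪f' w, w' - w⟫ = ⟪g' w', w' - w⟫ - ⟪g' w' - g' w, w' - w⟫ := by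
    rw [← heq, inner_sub_left]; ring
  -- descent lemma for f
  have hdesc := descent_lemma hβ hgradf hsmf w w'
  have hR2 : β / 2 * R ^ 2 ≤ β / 2 * ((1 + δ) * G / μ) ^ 2 := by
    apply mul_le_mul_of_nonneg_left _ (by positivity)
    exact pow_le_pow_left₀ hR0 hRle 2
  have hfinal : f w' ≤ f w + δ * G * ((1 + δ) * G / μ)
      - 1 / β * ((1 - δ) ^ 2 * G ^ 2) + β / 2 * ((1 + δ) * G / μ) ^ 2 := by
    rw [hsplit] at hdesc
    linarith
  have heqfin : f w + δ * G * ((1 + δ) * G / μ) - 1 / β * ((1 - δ) ^ 2 * G ^ 2)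
      + β / 2 * ((1 + δ) * G / μ) ^ 2
      = f w - ((1 - δ) ^ 2 / β - (1 + δ) * δ / μ - β * (1 + δ) ^ 2 / (2 * μ ^ 2)) * G ^ 2 := by
    field_simp
    ring
  linarith [hfinal, heqfin.le]
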